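/- Let r ≥ 3 be an odd integer and a ≥ r + 1 an even integer, and let G be the Grundy sequence of S({1, a, 2a + r}). Then: (i) G(n + 3a + r) = G(n) for all n ∈ ℕ; (ii) for 0 ≤ n < 3a + r: G(n) = n mod 2 if n < a; G(a) = 2; G(n) = (n − a − 1) mod 2 if a + 1 ≤ n ≤ 2a; G(2a + 1) = 2; G(n) = (n − 2a − 2) mod 2 if 2a + 2 ≤ n ≤ 3a + 1; G(n) = 2 + (n − 3a − 2) mod 2 if 3a + 2 ≤ n ≤ 3a + r − 2; and G(3a + r − 1) = 2; and (iii) for every c ≥ 1, G(n + c) ≠ G(n) holds for all n if and only if c = s + m(3a + r) for some m ∈ ℕ and s ∈ {1, a, a + 2, 2a + r − 2, 2a + r, 3a + r − 1}. -/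
import Mathlib


/-- The minimum excludant: the least natural number not in `X`. -/
noncomputable def mex (X : Set ℕ) : ℕ := sInf {m | m ∉ X}

/-- `G` is the Grundy (nim-value) sequence of the subtraction game with
subtraction set `S`: `G n = mex { G (n - s) : s ∈ S, s ≤ n }`. -/
def IsGrundy (S : Finset ℕ) (G : ℕ → ℕ) : Prop :=
  ∀ n, G n = mex {v | ∃ s ∈ S, s ≤ n ∧ v = G (n - s)}

set_option linter.unusedVariables false
set_option maxHeartbeats 1000000

lemma mex_eq_of {X : Set ℕ} {k : ℕ} (h1 : k ∉ X) (h2 : ∀ j < k, j ∈ X) : mex X = k := by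
  have hk : k ∈ {m | m ∉ X} := h1
  show sInf {m | m ∉ X} = k
  refine le_antisymm (Nat.sInf_le hk) ?_
  by_contra hcon
  push_neg at hcon
  exact (Nat.sInf_mem (⟨k, hk⟩ : Set.Nonempty {m | m ∉ X})) (h2 _ hcon)

def valf (a r n : ℕ) : ℕ :=
  if n < a then n % 2
  else if n = a then 2
  else if n ≤ 2*a then (n - a - 1) % 2
  else if n = 2*a + 1 then 2
  else if n ≤ 3*a + 1 then (n - 2*a - 2) % 2
  else if n ≤ 3*a + r - 2 then 2 + (n - 3*a - 2) % 2
  else 2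

def gf (a r n : ℕ) : ℕ := valf a r (n % (3*a + r))

lemma v_I1 {a r : ℕ} (hr : 3 ≤ r) (hro : r % 2 = 1) (har : r + 1 ≤ a) (hae : a % 2 = 0)
    {k : ℕ} (h : k < a) : valf a r k = k % 2 := by
  unfold valf; rw [if_pos h]

lemma v_a {a r : ℕ} (hr : 3 ≤ r) (hro : r % 2 = 1) (har : r + 1 ≤ a) (hae : a % 2 = 0) :
    valf a r a = 2 := by
  unfold valf; rw [if_neg (by omega), if_pos rfl]

lemma v_D {a r : ℕ} (hr : 3 ≤ r) (hro : r % 2 = 1) (har : r + 1 ≤ a) (hae : a % 2 = 0)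
    {k : ℕ} (h1 : a + 1 ≤ k) (h2 : k ≤ 2*a) : valf a r k = (k + 1) % 2 := by
  unfold valf; rw [if_neg (by omega), if_neg (by omega), if_pos h2]; omega

lemma v_E {a r : ℕ} (hr : 3 ≤ r) (hro : r % 2 = 1) (har : r + 1 ≤ a) (hae : a % 2 = 0) :
    valf a r (2*a+1) = 2 := by
  unfold valf
  rw [if_neg (by omega), if_neg (by omega), if_neg (by omega), if_pos rfl]

lemma v_F {a r : ℕ} (hr : 3 ≤ r) (hro : r % 2 = 1) (har : r + 1 ≤ a) (hae : a % 2 = 0)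
    {k : ℕ} (h1 : 2*a + 2 ≤ k) (h2 : k ≤ 3*a + 1) : valf a r k = k % 2 := by
  unfold valf
  rw [if_neg (by omega), if_neg (by omega), if_neg (by omega), if_neg (by omega), if_pos h2]
  omega

lemma v_G {a r : ℕ} (hr : 3 ≤ r) (hro : r % 2 = 1) (har : r + 1 ≤ a) (hae : a % 2 = 0)
    {k : ℕ} (h1 : 3*a + 2 ≤ k) (h2 : k ≤ 3*a + r - 2) : valf a r k = 2 + k % 2 := by
  unfold valf
  rw [if_neg (by omega), if_neg (by omega), if_neg (by omega), if_neg (by omega),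
    if_neg (by omega), if_pos h2]
  omega

lemma v_H {a r : ℕ} (hr : 3 ≤ r) (hro : r % 2 = 1) (har : r + 1 ≤ a) (hae : a % 2 = 0) :
    valf a r (3*a + r - 1) = 2 := by
  unfold valf
  rw [if_neg (by omega), if_neg (by omega), if_neg (by omega), if_neg (by omega),
    if_neg (by omega), if_neg (by omega)]

lemma v_up {a r : ℕ} (hr : 3 ≤ r) (hro : r % 2 = 1) (har : r + 1 ≤ a) (hae : a % 2 = 0)
    {k : ℕ} (h1 : 3*a + 2 ≤ k) (h2 : k ≤ 3*a + r - 1) : 2 ≤ valf a r k := by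
  rcases (by omega : k ≤ 3*a + r - 2 ∨ k = 3*a + r - 1) with h | h
  · rw [v_G hr hro har hae h1 h]; omega
  · rw [h, v_H hr hro har hae]

lemma mod_sub {P s n : ℕ} (hs1 : 0 < s) (hsP : s ≤ P) (hsn : s ≤ n) :
    (n - s) % P = (if s ≤ n % P then n % P - s else n % P + P - s) := by
  have h0 : 0 < P := by omega
  have hdm := Nat.div_add_mod n P
  have hmlt : n % P < P := Nat.mod_lt _ h0
  by_cases hc : s ≤ n % P
  · have he : n - s = P * (n / P) + (n % P - s) := by omega
    rw [he, if_pos hc, Nat.mul_add_mod, Nat.mod_eq_of_lt (by omega)]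
  · have hq : 1 ≤ n / P := by
      rcases Nat.eq_zero_or_pos (n / P) with h | h
      · rw [h, Nat.mul_zero] at hdm; omega
      · exact h
    obtain ⟨q', hq'⟩ : ∃ q', n / P = q' + 1 := ⟨n / P - 1, by omega⟩
    rw [hq', Nat.mul_succ] at hdm
    have he : n - s = P * q' + (n % P + P - s) := by omega
    rw [he, if_neg hc, Nat.mul_add_mod, Nat.mod_eq_of_lt (by omega)]

lemma mod_add {P s n : ℕ} (hsP : s < P) :
    (n + s) % P = (if n % P + s < P then n % P + s else n % P + s - P) := by
  have h0 : 0 < P := by omega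
  have hmlt : n % P < P := Nat.mod_lt _ h0
  rw [Nat.add_mod, Nat.mod_eq_of_lt hsP]
  by_cases hc : n % P + s < P
  · rw [if_pos hc, Nat.mod_eq_of_lt hc]
  · rw [if_neg hc, Nat.mod_eq_sub_mod (by omega), Nat.mod_eq_of_lt (by omega)]

lemma g_sub_eq (a r n s k : ℕ) (hs1 : 0 < s) (hsP : s ≤ 3*a+r) (hsn : s ≤ n)
    (hk : k + s = n % (3*a+r) ∨ (n % (3*a+r) < s ∧ k + s = n % (3*a+r) + (3*a+r))) :
    gf a r (n - s) = valf a r k := by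
  show valf a r ((n - s) % (3*a+r)) = _
  rw [mod_sub hs1 hsP hsn]
  rcases hk with h | ⟨h1, h2⟩
  · rw [if_pos (by omega)]; congr 1; omega
  · rw [if_neg (by omega)]; congr 1; omega

lemma g_add_eq (a r n s k : ℕ) (hsP : s < 3*a+r)
    (hk : (n % (3*a+r) + s < 3*a+r ∧ k = n % (3*a+r) + s) ∨
          (3*a+r ≤ n % (3*a+r) + s ∧ k + (3*a+r) = n % (3*a+r) + s)) :
    gf a r (n + s) = valf a r k := by
  show valf a r ((n + s) % (3*a+r)) = _
  rw [mod_add hsP]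
  rcases hk with ⟨h1, h2⟩ | ⟨h1, h2⟩
  · rw [if_pos h1]; congr 1; omega
  · rw [if_neg (by omega)]; congr 1; omega

lemma g_eq_val (a r : ℕ) {n : ℕ} (h : n < 3*a+r) : gf a r n = valf a r n := by
  show valf a r (n % (3*a+r)) = _
  rw [Nat.mod_eq_of_lt h]

lemma g_period (a r : ℕ) (n : ℕ) : gf a r (n + (3*a+r)) = gf a r n := by
  show valf a r _ = valf a r _
  rw [Nat.add_mod_right]

lemma g_period_mul (a r : ℕ) (n m : ℕ) : gf a r (n + m*(3*a+r)) = gf a r n := by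
  induction m with
  | zero => simp
  | succ m ih =>
      rw [show n + (m+1)*(3*a+r) = (n + m*(3*a+r)) + (3*a+r) by ring, g_period a r, ih]

lemma grundy_eq (a r : ℕ) (hr : 3 ≤ r) (hro : r % 2 = 1) (har : r + 1 ≤ a) (hae : a % 2 = 0)
    (G : ℕ → ℕ) (hG : IsGrundy {1, a, 2*a+r} G) : ∀ n, G n = gf a r n := by
  intro n
  induction n using Nat.strong_induction_on with
  | _ n ih =>
  have hP : 0 < 3*a+r := by omega
  have hmlt : n % (3*a+r) < 3*a+r := Nat.mod_lt _ hP
  have hmle : n % (3*a+r) ≤ n := Nat.mod_le _ _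
  rw [hG n]
  have hX : {v | ∃ s ∈ ({1, a, 2*a+r} : Finset ℕ), s ≤ n ∧ v = G (n - s)} =
      {v | (1 ≤ n ∧ v = gf a r (n-1)) ∨ (a ≤ n ∧ v = gf a r (n-a)) ∨
           (2*a+r ≤ n ∧ v = gf a r (n-(2*a+r)))} := by
    ext v
    simp only [Finset.mem_insert, Finset.mem_singleton, Set.mem_setOf_eq]
    constructor
    · rintro ⟨s, hs, hsn, rfl⟩
      rcases hs with h1 | h1 | h1
      · refine Or.inl ⟨by omega, ?_⟩
        rw [h1, ih (n-1) (by omega)]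
      · refine Or.inr (Or.inl ⟨by omega, ?_⟩)
        rw [h1, ih (n-a) (by omega)]
      · refine Or.inr (Or.inr ⟨by omega, ?_⟩)
        rw [h1, ih (n-(2*a+r)) (by omega)]
    · rintro (⟨h, rfl⟩ | ⟨h, rfl⟩ | ⟨h, rfl⟩)
      · exact ⟨1, by simp, h, (ih (n-1) (by omega)).symm⟩
      · exact ⟨a, by simp, h, (ih (n-a) (by omega)).symm⟩
      · exact ⟨2*a+r, by simp, h, (ih (n-(2*a+r)) (by omega)).symm⟩
  rw [hX]
  have hcase :
      n % (3*a+r) = 0 ∨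
      (1 ≤ n % (3*a+r) ∧ n % (3*a+r) ≤ a - 1) ∨
      n % (3*a+r) = a ∨
      n % (3*a+r) = a + 1 ∨
      (a + 2 ≤ n % (3*a+r) ∧ n % (3*a+r) ≤ 2*a - 1) ∨
      n % (3*a+r) = 2*a ∨
      n % (3*a+r) = 2*a + 1 ∨
      n % (3*a+r) = 2*a + 2 ∨
      (2*a + 3 ≤ n % (3*a+r) ∧ n % (3*a+r) ≤ 3*a) ∨
      n % (3*a+r) = 3*a + 1 ∨
      (n % (3*a+r) = 3*a + 2 ∧ 5 ≤ r) ∨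
      (3*a + 3 ≤ n % (3*a+r) ∧ n % (3*a+r) ≤ 3*a + r - 2) ∨
      n % (3*a+r) = 3*a + r - 1 := by omega
  rcases hcase with hc | ⟨hc1, hc2⟩ | hc | hc | ⟨hc1, hc2⟩ | hc | hc | hc | ⟨hc1, hc2⟩ |
    hc | ⟨hc, hc5⟩ | ⟨hc1, hc2⟩ | hc
  -- Case 1 : m = 0
  · have hvn : gf a r n = 0 := by
      show valf a r (n % (3*a+r)) = 0
      rw [hc, v_I1 hr hro har hae (by omega)]
    rw [hvn]
    apply mex_eq_of
    · intro hmem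
      simp only [Set.mem_setOf_eq] at hmem
      rcases hmem with ⟨h, e⟩ | ⟨h, e⟩ | ⟨h, e⟩
      · rw [g_sub_eq a r n 1 (3*a+r-1) (by omega) (by omega) h (by omega),
          v_H hr hro har hae] at e; omega
      · rw [g_sub_eq a r n a (2*a+r) (by omega) (by omega) h (by omega),
          v_F hr hro har hae (by omega) (by omega)] at e; omega
      · rw [g_sub_eq a r n (2*a+r) a (by omega) (by omega) h (by omega),
          v_a hr hro har hae] at e; omega
    · intro j hj; exact absurd hj (by omega)
  -- Case 2 : 1 ≤ m ≤ a-1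
  · have hvn : gf a r n = n % (3*a+r) % 2 := by
      show valf a r (n % (3*a+r)) = _
      rw [v_I1 hr hro har hae (by omega)]
    rw [hvn]
    apply mex_eq_of
    · intro hmem
      simp only [Set.mem_setOf_eq] at hmem
      rcases hmem with ⟨h, e⟩ | ⟨h, e⟩ | ⟨h, e⟩
      · rw [g_sub_eq a r n 1 (n % (3*a+r) - 1) (by omega) (by omega) h (by omega),
          v_I1 hr hro har hae (by omega)] at e; omega
      · rw [g_sub_eq a r n a (n % (3*a+r) + 2*a + r) (by omega) (by omega) h (by omega)] at e
        rcases (by omega : n % (3*a+r) + 2*a + r ≤ 3*a+1 ∨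
            (3*a+2 ≤ n % (3*a+r) + 2*a + r ∧ n % (3*a+r) + 2*a + r ≤ 3*a+r-2) ∨
            n % (3*a+r) + 2*a + r = 3*a+r-1) with h2 | ⟨h2, h3⟩ | h2
        · rw [v_F hr hro har hae (by omega) h2] at e; omega
        · rw [v_G hr hro har hae h2 h3] at e; omega
        · rw [h2, v_H hr hro har hae] at e; omega
      · rw [g_sub_eq a r n (2*a+r) (n % (3*a+r) + a) (by omega) (by omega) h (by omega),
          v_D hr hro har hae (by omega) (by omega)] at e; omega
    · intro j hj
      simp only [Set.mem_setOf_eq]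
      refine Or.inl ⟨by omega, ?_⟩
      rw [g_sub_eq a r n 1 (n % (3*a+r) - 1) (by omega) (by omega) (by omega) (by omega),
        v_I1 hr hro har hae (by omega)]
      omega
  -- Case 3 : m = a
  · have hvn : gf a r n = 2 := by
      show valf a r (n % (3*a+r)) = 2
      rw [hc]; exact v_a hr hro har hae
    rw [hvn]
    apply mex_eq_of
    · intro hmem
      simp only [Set.mem_setOf_eq] at hmem
      rcases hmem with ⟨h, e⟩ | ⟨h, e⟩ | ⟨h, e⟩
      · rw [g_sub_eq a r n 1 (a-1) (by omega) (by omega) h (by omega),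
          v_I1 hr hro har hae (by omega)] at e; omega
      · rw [g_sub_eq a r n a 0 (by omega) (by omega) h (by omega),
          v_I1 hr hro har hae (by omega)] at e; omega
      · rw [g_sub_eq a r n (2*a+r) (2*a) (by omega) (by omega) h (by omega),
          v_D hr hro har hae (by omega) (by omega)] at e; omega
    · intro j hj
      simp only [Set.mem_setOf_eq]
      rcases (by omega : j = 0 ∨ j = 1) with rfl | rfl
      · refine Or.inr (Or.inl ⟨by omega, ?_⟩)
        rw [g_sub_eq a r n a 0 (by omega) (by omega) (by omega) (by omega),
          v_I1 hr hro har hae (by omega)]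
      · refine Or.inl ⟨by omega, ?_⟩
        rw [g_sub_eq a r n 1 (a-1) (by omega) (by omega) (by omega) (by omega),
          v_I1 hr hro har hae (by omega)]
        omega
  -- Case 4 : m = a+1
  · have hvn : gf a r n = 0 := by
      show valf a r (n % (3*a+r)) = 0
      rw [hc, v_D hr hro har hae (by omega) (by omega)]; omega
    rw [hvn]
    apply mex_eq_of
    · intro hmem
      simp only [Set.mem_setOf_eq] at hmem
      rcases hmem with ⟨h, e⟩ | ⟨h, e⟩ | ⟨h, e⟩
      · rw [g_sub_eq a r n 1 a (by omega) (by omega) h (by omega),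
          v_a hr hro har hae] at e; omega
      · rw [g_sub_eq a r n a 1 (by omega) (by omega) h (by omega),
          v_I1 hr hro har hae (by omega)] at e; omega
      · rw [g_sub_eq a r n (2*a+r) (2*a+1) (by omega) (by omega) h (by omega),
          v_E hr hro har hae] at e; omega
    · intro j hj; exact absurd hj (by omega)
  -- Case 5 : a+2 ≤ m ≤ 2a-1
  · have hvn : gf a r n = (n % (3*a+r) + 1) % 2 := by
      show valf a r (n % (3*a+r)) = _
      rw [v_D hr hro har hae (by omega) (by omega)]
    rw [hvn]
    apply mex_eq_of
    · intro hmem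
      simp only [Set.mem_setOf_eq] at hmem
      rcases hmem with ⟨h, e⟩ | ⟨h, e⟩ | ⟨h, e⟩
      · rw [g_sub_eq a r n 1 (n % (3*a+r) - 1) (by omega) (by omega) h (by omega),
          v_D hr hro har hae (by omega) (by omega)] at e; omega
      · rw [g_sub_eq a r n a (n % (3*a+r) - a) (by omega) (by omega) h (by omega),
          v_I1 hr hro har hae (by omega)] at e; omega
      · rw [g_sub_eq a r n (2*a+r) (n % (3*a+r) + a) (by omega) (by omega) h (by omega),
          v_F hr hro har hae (by omega) (by omega)] at e; omega
    · intro j hj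
      simp only [Set.mem_setOf_eq]
      refine Or.inl ⟨by omega, ?_⟩
      rw [g_sub_eq a r n 1 (n % (3*a+r) - 1) (by omega) (by omega) (by omega) (by omega),
        v_D hr hro har hae (by omega) (by omega)]
      omega
  -- Case 6 : m = 2a
  · have hvn : gf a r n = 1 := by
      show valf a r (n % (3*a+r)) = 1
      rw [hc, v_D hr hro har hae (by omega) (by omega)]; omega
    rw [hvn]
    apply mex_eq_of
    · intro hmem
      simp only [Set.mem_setOf_eq] at hmem
      rcases hmem with ⟨h, e⟩ | ⟨h, e⟩ | ⟨h, e⟩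
      · rw [g_sub_eq a r n 1 (2*a-1) (by omega) (by omega) h (by omega),
          v_D hr hro har hae (by omega) (by omega)] at e; omega
      · rw [g_sub_eq a r n a a (by omega) (by omega) h (by omega),
          v_a hr hro har hae] at e; omega
      · rw [g_sub_eq a r n (2*a+r) (3*a) (by omega) (by omega) h (by omega),
          v_F hr hro har hae (by omega) (by omega)] at e; omega
    · intro j hj
      simp only [Set.mem_setOf_eq]
      rcases (by omega : j = 0) with rfl
      refine Or.inl ⟨by omega, ?_⟩
      rw [g_sub_eq a r n 1 (2*a-1) (by omega) (by omega) (by omega) (by omega),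
        v_D hr hro har hae (by omega) (by omega)]
      omega
  -- Case 7 : m = 2a+1
  · have hvn : gf a r n = 2 := by
      show valf a r (n % (3*a+r)) = 2
      rw [hc]; exact v_E hr hro har hae
    rw [hvn]
    apply mex_eq_of
    · intro hmem
      simp only [Set.mem_setOf_eq] at hmem
      rcases hmem with ⟨h, e⟩ | ⟨h, e⟩ | ⟨h, e⟩
      · rw [g_sub_eq a r n 1 (2*a) (by omega) (by omega) h (by omega),
          v_D hr hro har hae (by omega) (by omega)] at e; omega
      · rw [g_sub_eq a r n a (a+1) (by omega) (by omega) h (by omega),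
          v_D hr hro har hae (by omega) (by omega)] at e; omega
      · rw [g_sub_eq a r n (2*a+r) (3*a+1) (by omega) (by omega) h (by omega),
          v_F hr hro har hae (by omega) (by omega)] at e; omega
    · intro j hj
      simp only [Set.mem_setOf_eq]
      rcases (by omega : j = 0 ∨ j = 1) with rfl | rfl
      · refine Or.inr (Or.inl ⟨by omega, ?_⟩)
        rw [g_sub_eq a r n a (a+1) (by omega) (by omega) (by omega) (by omega),
          v_D hr hro har hae (by omega) (by omega)]
        omega
      · refine Or.inl ⟨by omega, ?_⟩
        rw [g_sub_eq a r n 1 (2*a) (by omega) (by omega) (by omega) (by omega),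
          v_D hr hro har hae (by omega) (by omega)]
        omega
  -- Case 8 : m = 2a+2
  · have hvn : gf a r n = 0 := by
      show valf a r (n % (3*a+r)) = 0
      rw [hc, v_F hr hro har hae (by omega) (by omega)]; omega
    rw [hvn]
    apply mex_eq_of
    · intro hmem
      simp only [Set.mem_setOf_eq] at hmem
      rcases hmem with ⟨h, e⟩ | ⟨h, e⟩ | ⟨h, e⟩
      · rw [g_sub_eq a r n 1 (2*a+1) (by omega) (by omega) h (by omega),
          v_E hr hro har hae] at e; omega
      · rw [g_sub_eq a r n a (a+2) (by omega) (by omega) h (by omega),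
          v_D hr hro har hae (by omega) (by omega)] at e; omega
      · rw [g_sub_eq a r n (2*a+r) (3*a+2) (by omega) (by omega) h (by omega)] at e
        have hup := v_up hr hro har hae (k := 3*a+2) (by omega) (by omega)
        omega
    · intro j hj; exact absurd hj (by omega)
  -- Case 9 : 2a+3 ≤ m ≤ 3a
  · have hvn : gf a r n = n % (3*a+r) % 2 := by
      show valf a r (n % (3*a+r)) = _
      rw [v_F hr hro har hae (by omega) (by omega)]
    rw [hvn]
    apply mex_eq_of
    · intro hmem
      simp only [Set.mem_setOf_eq] at hmem
      rcases hmem with ⟨h, e⟩ | ⟨h, e⟩ | ⟨h, e⟩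
      · rw [g_sub_eq a r n 1 (n % (3*a+r) - 1) (by omega) (by omega) h (by omega),
          v_F hr hro har hae (by omega) (by omega)] at e; omega
      · rw [g_sub_eq a r n a (n % (3*a+r) - a) (by omega) (by omega) h (by omega),
          v_D hr hro har hae (by omega) (by omega)] at e; omega
      · rcases (by omega : 2*a+r ≤ n % (3*a+r) ∨ n % (3*a+r) < 2*a+r) with h3 | h3
        · rw [g_sub_eq a r n (2*a+r) (n % (3*a+r) - (2*a+r)) (by omega) (by omega) h
            (by omega), v_I1 hr hro har hae (by omega)] at e; omega
        · rw [g_sub_eq a r n (2*a+r) (n % (3*a+r) + a) (by omega) (by omega) h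
            (by omega)] at e
          have hup := v_up hr hro har hae (k := n % (3*a+r) + a) (by omega) (by omega)
          omega
    · intro j hj
      simp only [Set.mem_setOf_eq]
      refine Or.inl ⟨by omega, ?_⟩
      rw [g_sub_eq a r n 1 (n % (3*a+r) - 1) (by omega) (by omega) (by omega) (by omega),
        v_F hr hro har hae (by omega) (by omega)]
      omega
  -- Case 10 : m = 3a+1
  · have hvn : gf a r n = 1 := by
      show valf a r (n % (3*a+r)) = 1
      rw [hc, v_F hr hro har hae (by omega) (by omega)]; omega
    rw [hvn]
    apply mex_eq_of
    · intro hmem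
      simp only [Set.mem_setOf_eq] at hmem
      rcases hmem with ⟨h, e⟩ | ⟨h, e⟩ | ⟨h, e⟩
      · rw [g_sub_eq a r n 1 (3*a) (by omega) (by omega) h (by omega),
          v_F hr hro har hae (by omega) (by omega)] at e; omega
      · rw [g_sub_eq a r n a (2*a+1) (by omega) (by omega) h (by omega),
          v_E hr hro har hae] at e; omega
      · rw [g_sub_eq a r n (2*a+r) (a+1-r) (by omega) (by omega) h (by omega),
          v_I1 hr hro har hae (by omega)] at e; omega
    · intro j hj
      simp only [Set.mem_setOf_eq]
      rcases (by omega : j = 0) with rfl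
      refine Or.inl ⟨by omega, ?_⟩
      rw [g_sub_eq a r n 1 (3*a) (by omega) (by omega) (by omega) (by omega),
        v_F hr hro har hae (by omega) (by omega)]
      omega
  -- Case 11 : m = 3a+2, r ≥ 5
  · have hvn : gf a r n = 2 := by
      show valf a r (n % (3*a+r)) = 2
      rw [hc, v_G hr hro har hae (by omega) (by omega)]; omega
    rw [hvn]
    apply mex_eq_of
    · intro hmem
      simp only [Set.mem_setOf_eq] at hmem
      rcases hmem with ⟨h, e⟩ | ⟨h, e⟩ | ⟨h, e⟩
      · rw [g_sub_eq a r n 1 (3*a+1) (by omega) (by omega) h (by omega),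
          v_F hr hro har hae (by omega) (by omega)] at e; omega
      · rw [g_sub_eq a r n a (2*a+2) (by omega) (by omega) h (by omega),
          v_F hr hro har hae (by omega) (by omega)] at e; omega
      · rw [g_sub_eq a r n (2*a+r) (a+2-r) (by omega) (by omega) h (by omega),
          v_I1 hr hro har hae (by omega)] at e; omega
    · intro j hj
      simp only [Set.mem_setOf_eq]
      rcases (by omega : j = 0 ∨ j = 1) with rfl | rfl
      · refine Or.inr (Or.inl ⟨by omega, ?_⟩)
        rw [g_sub_eq a r n a (2*a+2) (by omega) (by omega) (by omega) (by omega),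
          v_F hr hro har hae (by omega) (by omega)]
        omega
      · refine Or.inl ⟨by omega, ?_⟩
        rw [g_sub_eq a r n 1 (3*a+1) (by omega) (by omega) (by omega) (by omega),
          v_F hr hro har hae (by omega) (by omega)]
        omega
  -- Case 12 : 3a+3 ≤ m ≤ 3a+r-2
  · have hvn : gf a r n = 2 + n % (3*a+r) % 2 := by
      show valf a r (n % (3*a+r)) = _
      rw [v_G hr hro har hae (by omega) (by omega)]
    rw [hvn]
    apply mex_eq_of
    · intro hmem
      simp only [Set.mem_setOf_eq] at hmem
      rcases hmem with ⟨h, e⟩ | ⟨h, e⟩ | ⟨h, e⟩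
      · rw [g_sub_eq a r n 1 (n % (3*a+r) - 1) (by omega) (by omega) h (by omega),
          v_G hr hro har hae (by omega) (by omega)] at e; omega
      · rw [g_sub_eq a r n a (n % (3*a+r) - a) (by omega) (by omega) h (by omega),
          v_F hr hro har hae (by omega) (by omega)] at e; omega
      · rw [g_sub_eq a r n (2*a+r) (n % (3*a+r) - (2*a+r)) (by omega) (by omega) h
          (by omega), v_I1 hr hro har hae (by omega)] at e; omega
    · intro j hj
      simp only [Set.mem_setOf_eq]
      rcases (by omega : n % (3*a+r) % 2 = 0 ∨ n % (3*a+r) % 2 = 1) with hp | hp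
      · rcases (by omega : j = 0 ∨ j = 1) with rfl | rfl
        · refine Or.inr (Or.inl ⟨by omega, ?_⟩)
          rw [g_sub_eq a r n a (n % (3*a+r) - a) (by omega) (by omega) (by omega)
            (by omega), v_F hr hro har hae (by omega) (by omega)]
          omega
        · refine Or.inr (Or.inr ⟨by omega, ?_⟩)
          rw [g_sub_eq a r n (2*a+r) (n % (3*a+r) - (2*a+r)) (by omega) (by omega)
            (by omega) (by omega), v_I1 hr hro har hae (by omega)]
          omega
      · rcases (by omega : j = 0 ∨ j = 1 ∨ j = 2) with rfl | rfl | rfl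
        · refine Or.inr (Or.inr ⟨by omega, ?_⟩)
          rw [g_sub_eq a r n (2*a+r) (n % (3*a+r) - (2*a+r)) (by omega) (by omega)
            (by omega) (by omega), v_I1 hr hro har hae (by omega)]
          omega
        · refine Or.inr (Or.inl ⟨by omega, ?_⟩)
          rw [g_sub_eq a r n a (n % (3*a+r) - a) (by omega) (by omega) (by omega)
            (by omega), v_F hr hro har hae (by omega) (by omega)]
          omega
        · refine Or.inl ⟨by omega, ?_⟩
          rw [g_sub_eq a r n 1 (n % (3*a+r) - 1) (by omega) (by omega) (by omega)
            (by omega), v_G hr hro har hae (by omega) (by omega)]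
          omega
  -- Case 13 : m = 3a+r-1
  · have hvn : gf a r n = 2 := by
      show valf a r (n % (3*a+r)) = 2
      rw [hc]; exact v_H hr hro har hae
    rw [hvn]
    apply mex_eq_of
    · intro hmem
      simp only [Set.mem_setOf_eq] at hmem
      rcases hmem with ⟨h, e⟩ | ⟨h, e⟩ | ⟨h, e⟩
      · rw [g_sub_eq a r n 1 (3*a+r-2) (by omega) (by omega) h (by omega)] at e
        rcases (by omega : r = 3 ∨ 5 ≤ r) with h3 | h3
        · rw [show 3*a+r-2 = 3*a+1 by omega, v_F hr hro har hae (by omega) (by omega)] at e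
          omega
        · rw [v_G hr hro har hae (by omega) (by omega)] at e; omega
      · rw [g_sub_eq a r n a (2*a+r-1) (by omega) (by omega) h (by omega),
          v_F hr hro har hae (by omega) (by omega)] at e; omega
      · rw [g_sub_eq a r n (2*a+r) (a-1) (by omega) (by omega) h (by omega),
          v_I1 hr hro har hae (by omega)] at e; omega
    · intro j hj
      simp only [Set.mem_setOf_eq]
      rcases (by omega : j = 0 ∨ j = 1) with rfl | rfl
      · refine Or.inr (Or.inl ⟨by omega, ?_⟩)
        rw [g_sub_eq a r n a (2*a+r-1) (by omega) (by omega) (by omega) (by omega),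
          v_F hr hro har hae (by omega) (by omega)]
        omega
      · refine Or.inr (Or.inr ⟨by omega, ?_⟩)
        rw [g_sub_eq a r n (2*a+r) (a-1) (by omega) (by omega) (by omega) (by omega),
          v_I1 hr hro har hae (by omega)]
        omega

lemma safe1 (a r : ℕ) (hr : 3 ≤ r) (hro : r % 2 = 1) (har : r + 1 ≤ a) (hae : a % 2 = 0) :
    ∀ n, gf a r (n + 1) ≠ gf a r n := by
  intro n
  have hP : 0 < 3*a+r := by omega
  have hmlt : n % (3*a+r) < 3*a+r := Nat.mod_lt _ hP
  have hsrc : gf a r n = valf a r (n % (3*a+r)) := rfl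
  rcases (by omega : n % (3*a+r) + 2 ≤ a ∨ n % (3*a+r) = a-1 ∨ n % (3*a+r) = a ∨
      (a+1 ≤ n % (3*a+r) ∧ n % (3*a+r) ≤ 2*a-1) ∨ n % (3*a+r) = 2*a ∨
      n % (3*a+r) = 2*a+1 ∨ (2*a+2 ≤ n % (3*a+r) ∧ n % (3*a+r) ≤ 3*a) ∨
      n % (3*a+r) = 3*a+1 ∨ (3*a+2 ≤ n % (3*a+r) ∧ n % (3*a+r) ≤ 3*a+r-3) ∨
      (n % (3*a+r) = 3*a+r-2 ∧ 5 ≤ r) ∨ n % (3*a+r) = 3*a+r-1) with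
    hc | hc | hc | ⟨hc1, hc2⟩ | hc | hc | ⟨hc1, hc2⟩ | hc | ⟨hc1, hc2⟩ | ⟨hc, hc5⟩ | hc
  · rw [g_add_eq a r n 1 (n % (3*a+r) + 1) (by omega) (by omega), hsrc,
      v_I1 hr hro har hae (by omega), v_I1 hr hro har hae (by omega)]; omega
  · rw [g_add_eq a r n 1 a (by omega) (by omega), hsrc, v_a hr hro har hae,
      v_I1 hr hro har hae (by omega)]; omega
  · rw [g_add_eq a r n 1 (a+1) (by omega) (by omega), hsrc,
      v_D hr hro har hae (by omega) (by omega), hc, v_a hr hro har hae]; omega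
  · rw [g_add_eq a r n 1 (n % (3*a+r) + 1) (by omega) (by omega), hsrc,
      v_D hr hro har hae (by omega) (by omega), v_D hr hro har hae (by omega) (by omega)]
    omega
  · rw [g_add_eq a r n 1 (2*a+1) (by omega) (by omega), hsrc, v_E hr hro har hae,
      v_D hr hro har hae (by omega) (by omega)]; omega
  · rw [g_add_eq a r n 1 (2*a+2) (by omega) (by omega), hsrc,
      v_F hr hro har hae (by omega) (by omega), hc, v_E hr hro har hae]; omega
  · rw [g_add_eq a r n 1 (n % (3*a+r) + 1) (by omega) (by omega), hsrc,
      v_F hr hro har hae (by omega) (by omega), v_F hr hro har hae (by omega) (by omega)]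
    omega
  · have hup := v_up hr hro har hae (k := 3*a+2) (by omega) (by omega)
    rw [g_add_eq a r n 1 (3*a+2) (by omega) (by omega), hsrc,
      v_F hr hro har hae (k := n % (3*a+r)) (by omega) (by omega)]; omega
  · rw [g_add_eq a r n 1 (n % (3*a+r) + 1) (by omega) (by omega), hsrc,
      v_G hr hro har hae (by omega) (by omega), v_G hr hro har hae (by omega) (by omega)]
    omega
  · rw [g_add_eq a r n 1 (3*a+r-1) (by omega) (by omega), hsrc, v_H hr hro har hae,
      v_G hr hro har hae (by omega) (by omega)]; omega
  · rw [g_add_eq a r n 1 0 (by omega) (by omega), hsrc, hc, v_H hr hro har hae,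
      v_I1 hr hro har hae (by omega)]; omega

lemma safe_a (a r : ℕ) (hr : 3 ≤ r) (hro : r % 2 = 1) (har : r + 1 ≤ a) (hae : a % 2 = 0) :
    ∀ n, gf a r (n + a) ≠ gf a r n := by
  intro n
  have hP : 0 < 3*a+r := by omega
  have hmlt : n % (3*a+r) < 3*a+r := Nat.mod_lt _ hP
  have hsrc : gf a r n = valf a r (n % (3*a+r)) := rfl
  rcases (by omega : n % (3*a+r) = 0 ∨ (1 ≤ n % (3*a+r) ∧ n % (3*a+r) ≤ a-1) ∨
      n % (3*a+r) = a ∨ n % (3*a+r) = a+1 ∨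
      (a+2 ≤ n % (3*a+r) ∧ n % (3*a+r) ≤ 2*a) ∨ n % (3*a+r) = 2*a+1 ∨
      (2*a+2 ≤ n % (3*a+r) ∧ n % (3*a+r) ≤ 2*a+r-1) ∨
      (2*a+r ≤ n % (3*a+r) ∧ n % (3*a+r) ≤ 3*a+1) ∨
      (3*a+2 ≤ n % (3*a+r) ∧ n % (3*a+r) ≤ 3*a+r-2) ∨ n % (3*a+r) = 3*a+r-1) with
    hc | ⟨hc1, hc2⟩ | hc | hc | ⟨hc1, hc2⟩ | hc | ⟨hc1, hc2⟩ | ⟨hc1, hc2⟩ | ⟨hc1, hc2⟩ | hc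
  · rw [g_add_eq a r n a a (by omega) (by omega), hsrc, hc, v_a hr hro har hae,
      v_I1 hr hro har hae (by omega)]; omega
  · rw [g_add_eq a r n a (n % (3*a+r) + a) (by omega) (by omega), hsrc,
      v_D hr hro har hae (by omega) (by omega), v_I1 hr hro har hae (by omega)]; omega
  · rw [g_add_eq a r n a (2*a) (by omega) (by omega), hsrc,
      v_D hr hro har hae (by omega) (by omega), hc, v_a hr hro har hae]; omega
  · rw [g_add_eq a r n a (2*a+1) (by omega) (by omega), hsrc, v_E hr hro har hae,
      v_D hr hro har hae (by omega) (by omega)]; omega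
  · rw [g_add_eq a r n a (n % (3*a+r) + a) (by omega) (by omega), hsrc,
      v_F hr hro har hae (by omega) (by omega), v_D hr hro har hae (by omega) (by omega)]
    omega
  · rw [g_add_eq a r n a (3*a+1) (by omega) (by omega), hsrc,
      v_F hr hro har hae (by omega) (by omega), hc, v_E hr hro har hae]; omega
  · have hup := v_up hr hro har hae (k := n % (3*a+r) + a) (by omega) (by omega)
    rw [g_add_eq a r n a (n % (3*a+r) + a) (by omega) (by omega), hsrc,
      v_F hr hro har hae (k := n % (3*a+r)) (by omega) (by omega)]; omega
  · rw [g_add_eq a r n a (n % (3*a+r) - (2*a+r)) (by omega) (by omega), hsrc,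
      v_F hr hro har hae (k := n % (3*a+r)) (by omega) (by omega),
      v_I1 hr hro har hae (by omega)]; omega
  · rw [g_add_eq a r n a (n % (3*a+r) - (2*a+r)) (by omega) (by omega), hsrc,
      v_G hr hro har hae (k := n % (3*a+r)) (by omega) (by omega),
      v_I1 hr hro har hae (by omega)]; omega
  · rw [g_add_eq a r n a (a-1) (by omega) (by omega), hsrc, hc, v_H hr hro har hae,
      v_I1 hr hro har hae (by omega)]; omega

lemma safe_a2 (a r : ℕ) (hr : 3 ≤ r) (hro : r % 2 = 1) (har : r + 1 ≤ a) (hae : a % 2 = 0) :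
    ∀ n, gf a r (n + (a+2)) ≠ gf a r n := by
  intro n
  have hP : 0 < 3*a+r := by omega
  have hmlt : n % (3*a+r) < 3*a+r := Nat.mod_lt _ hP
  have hsrc : gf a r n = valf a r (n % (3*a+r)) := rfl
  rcases (by omega : n % (3*a+r) + 2 ≤ a ∨ n % (3*a+r) = a-1 ∨ n % (3*a+r) = a ∨
      (a+1 ≤ n % (3*a+r) ∧ n % (3*a+r) ≤ 2*a-1) ∨ n % (3*a+r) = 2*a ∨
      (n % (3*a+r) = 2*a+1 ∧ r = 3) ∨ (n % (3*a+r) = 2*a+1 ∧ 5 ≤ r) ∨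
      (2*a+2 ≤ n % (3*a+r) ∧ n % (3*a+r) ≤ 2*a+r-3) ∨
      (n % (3*a+r) = 2*a+r-2 ∧ 5 ≤ r) ∨
      (2*a+r-1 ≤ n % (3*a+r) ∧ n % (3*a+r) ≤ 3*a+1 ∧ n % (3*a+r) ≤ 3*a+r-3) ∨
      (n % (3*a+r) = 3*a+1 ∧ r = 3) ∨
      (3*a+2 ≤ n % (3*a+r) ∧ n % (3*a+r) ≤ 3*a+r-3) ∨
      (n % (3*a+r) = 3*a+r-2 ∧ 5 ≤ r) ∨ n % (3*a+r) = 3*a+r-1) with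
    hc | hc | hc | ⟨hc1, hc2⟩ | hc | ⟨hc, hc3⟩ | ⟨hc, hc5⟩ | ⟨hc1, hc2⟩ | ⟨hc, hc5⟩ |
    ⟨hc1, hc2, hc3⟩ | ⟨hc, hc3⟩ | ⟨hc1, hc2⟩ | ⟨hc, hc5⟩ | hc
  · rw [g_add_eq a r n (a+2) (n % (3*a+r) + (a+2)) (by omega) (by omega), hsrc,
      v_D hr hro har hae (by omega) (by omega), v_I1 hr hro har hae (by omega)]; omega
  · rw [g_add_eq a r n (a+2) (2*a+1) (by omega) (by omega), hsrc, v_E hr hro har hae,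
      v_I1 hr hro har hae (by omega)]; omega
  · rw [g_add_eq a r n (a+2) (2*a+2) (by omega) (by omega), hsrc,
      v_F hr hro har hae (by omega) (by omega), hc, v_a hr hro har hae]; omega
  · rw [g_add_eq a r n (a+2) (n % (3*a+r) + (a+2)) (by omega) (by omega), hsrc,
      v_F hr hro har hae (by omega) (by omega), v_D hr hro har hae (by omega) (by omega)]
    omega
  · have hup := v_up hr hro har hae (k := 3*a+2) (by omega) (by omega)
    rw [g_add_eq a r n (a+2) (3*a+2) (by omega) (by omega), hsrc,
      v_D hr hro har hae (k := n % (3*a+r)) (by omega) (by omega)]; omega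
  · rw [g_add_eq a r n (a+2) 0 (by omega) (by omega), hsrc, hc, v_E hr hro har hae,
      v_I1 hr hro har hae (by omega)]; omega
  · rw [g_add_eq a r n (a+2) (3*a+3) (by omega) (by omega), hsrc, hc, v_E hr hro har hae,
      v_G hr hro har hae (by omega) (by omega)]; omega
  · have hup := v_up hr hro har hae (k := n % (3*a+r) + (a+2)) (by omega) (by omega)
    rw [g_add_eq a r n (a+2) (n % (3*a+r) + (a+2)) (by omega) (by omega), hsrc,
      v_F hr hro har hae (k := n % (3*a+r)) (by omega) (by omega)]; omega
  · rw [g_add_eq a r n (a+2) 0 (by omega) (by omega), hsrc,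
      v_F hr hro har hae (k := n % (3*a+r)) (by omega) (by omega),
      v_I1 hr hro har hae (by omega)]; omega
  · rw [g_add_eq a r n (a+2) (n % (3*a+r) + (a+2) - (3*a+r)) (by omega) (by omega), hsrc,
      v_F hr hro har hae (k := n % (3*a+r)) (by omega) (by omega),
      v_I1 hr hro har hae (by omega)]; omega
  · rw [g_add_eq a r n (a+2) a (by omega) (by omega), hsrc, v_a hr hro har hae,
      v_F hr hro har hae (by omega) (by omega)]; omega
  · rw [g_add_eq a r n (a+2) (n % (3*a+r) + (a+2) - (3*a+r)) (by omega) (by omega), hsrc,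
      v_G hr hro har hae (k := n % (3*a+r)) (by omega) (by omega),
      v_I1 hr hro har hae (by omega)]; omega
  · rw [g_add_eq a r n (a+2) a (by omega) (by omega), hsrc, v_a hr hro har hae,
      v_G hr hro har hae (by omega) (by omega)]; omega
  · rw [g_add_eq a r n (a+2) (a+1) (by omega) (by omega), hsrc, hc, v_H hr hro har hae,
      v_D hr hro har hae (by omega) (by omega)]; omega

lemma safe_compl (a r : ℕ) (s : ℕ) (hsP : s ≤ 3*a+r)
    (hsafe : ∀ n, gf a r (n + s) ≠ gf a r n) :
    ∀ n, gf a r (n + (3*a+r - s)) ≠ gf a r n := by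
  intro n h
  have h2 := hsafe (n + (3*a+r - s))
  rw [show n + (3*a+r - s) + s = n + (3*a+r) by omega, g_period] at h2
  exact h2 h.symm

lemma collision (a r : ℕ) (hr : 3 ≤ r) (hro : r % 2 = 1) (har : r + 1 ≤ a) (hae : a % 2 = 0)
    (s : ℕ) (hs : s < 3*a+r) (H1 : s ≠ 1) (H2 : s ≠ a) (H3 : s ≠ a+2)
    (H4 : s ≠ 2*a+r-2) (H5 : s ≠ 2*a+r) (H6 : s ≠ 3*a+r-1) :
    ∃ n, gf a r (n + s) = gf a r n := by
  rcases (by omega : s = 0 ∨ (s % 2 = 1 ∧ 3 ≤ s ∧ s ≤ a+1) ∨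
      (s % 2 = 1 ∧ a+2 ≤ s ∧ s ≤ 2*a-1) ∨ (s % 2 = 1 ∧ 2*a+1 ≤ s ∧ s ≤ 2*a+r-4) ∨
      (s % 2 = 1 ∧ 2*a+r+2 ≤ s ∧ s ≤ 3*a+r-2) ∨ (s % 2 = 0 ∧ 2 ≤ s ∧ s ≤ a-2) ∨
      (s % 2 = 0 ∧ a+4 ≤ s ∧ s ≤ 2*a+2) ∨ (s % 2 = 0 ∧ 2*a+4 ≤ s ∧ s ≤ 3*a) ∨
      (s % 2 = 0 ∧ a+r+1 ≤ s ∧ s ≤ 2*a+r-1) ∨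
      (s % 2 = 0 ∧ 2*a+r+1 ≤ s ∧ s ≤ 3*a+r-3)) with
    hc | ⟨hp, hc1, hc2⟩ | ⟨hp, hc1, hc2⟩ | ⟨hp, hc1, hc2⟩ | ⟨hp, hc1, hc2⟩ |
    ⟨hp, hc1, hc2⟩ | ⟨hp, hc1, hc2⟩ | ⟨hp, hc1, hc2⟩ | ⟨hp, hc1, hc2⟩ | ⟨hp, hc1, hc2⟩
  · subst hc; exact ⟨0, by simp⟩
  · refine ⟨a+1-s, ?_⟩
    have hn : (a+1-s) % (3*a+r) = a+1-s := Nat.mod_eq_of_lt (by omega)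
    have hsrc : gf a r (a+1-s) = valf a r (a+1-s) := g_eq_val a r (by omega)
    rw [g_add_eq a r (a+1-s) s (a+1) (by omega) (by omega), hsrc,
      v_D hr hro har hae (by omega) (by omega), v_I1 hr hro har hae (by omega)]
    omega
  · refine ⟨0, ?_⟩
    have hn : 0 % (3*a+r) = 0 := Nat.zero_mod _
    have hsrc : gf a r 0 = valf a r 0 := g_eq_val a r (by omega)
    rw [show (0:ℕ) + s = s by omega, show gf a r s = valf a r s from g_eq_val a r (by omega),
      hsrc, v_D hr hro har hae (by omega) (by omega), v_I1 hr hro har hae (by omega)]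
    omega
  · refine ⟨2*a+2, ?_⟩
    have hn : (2*a+2) % (3*a+r) = 2*a+2 := Nat.mod_eq_of_lt (by omega)
    have hsrc : gf a r (2*a+2) = valf a r (2*a+2) := g_eq_val a r (by omega)
    rw [g_add_eq a r (2*a+2) s (s - (a+r) + 2) (by omega) (by omega), hsrc,
      v_I1 hr hro har hae (by omega), v_F hr hro har hae (by omega) (by omega)]
    omega
  · refine ⟨2*a-1, ?_⟩
    have hn : (2*a-1) % (3*a+r) = 2*a-1 := Nat.mod_eq_of_lt (by omega)
    have hsrc : gf a r (2*a-1) = valf a r (2*a-1) := g_eq_val a r (by omega)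
    rw [g_add_eq a r (2*a-1) s (s - (a+r) - 1) (by omega) (by omega), hsrc,
      v_D hr hro har hae (by omega) (by omega), v_D hr hro har hae (by omega) (by omega)]
    omega
  · refine ⟨0, ?_⟩
    have hsrc : gf a r 0 = valf a r 0 := g_eq_val a r (by omega)
    rw [show (0:ℕ) + s = s by omega, show gf a r s = valf a r s from g_eq_val a r (by omega),
      hsrc, v_I1 hr hro har hae (by omega), v_I1 hr hro har hae (by omega)]
    omega
  · refine ⟨2*a+2-s, ?_⟩
    have hn : (2*a+2-s) % (3*a+r) = 2*a+2-s := Nat.mod_eq_of_lt (by omega)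
    have hsrc : gf a r (2*a+2-s) = valf a r (2*a+2-s) := g_eq_val a r (by omega)
    rw [g_add_eq a r (2*a+2-s) s (2*a+2) (by omega) (by omega), hsrc,
      v_F hr hro har hae (by omega) (by omega), v_I1 hr hro har hae (by omega)]
    omega
  · refine ⟨0, ?_⟩
    have hsrc : gf a r 0 = valf a r 0 := g_eq_val a r (by omega)
    rw [show (0:ℕ) + s = s by omega, show gf a r s = valf a r s from g_eq_val a r (by omega),
      hsrc, v_F hr hro har hae (by omega) (by omega), v_I1 hr hro har hae (by omega)]
    omega
  · refine ⟨4*a+r+1-s, ?_⟩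
    have hn : (4*a+r+1-s) % (3*a+r) = 4*a+r+1-s := Nat.mod_eq_of_lt (by omega)
    have hsrc : gf a r (4*a+r+1-s) = valf a r (4*a+r+1-s) := g_eq_val a r (by omega)
    rw [g_add_eq a r (4*a+r+1-s) s (a+1) (by omega) (by omega), hsrc,
      v_D hr hro har hae (by omega) (by omega), v_F hr hro har hae (by omega) (by omega)]
    omega
  · refine ⟨2*a+2, ?_⟩
    have hn : (2*a+2) % (3*a+r) = 2*a+2 := Nat.mod_eq_of_lt (by omega)
    have hsrc : gf a r (2*a+2) = valf a r (2*a+2) := g_eq_val a r (by omega)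
    rw [g_add_eq a r (2*a+2) s (s - (a+r) + 2) (by omega) (by omega), hsrc,
      v_D hr hro har hae (by omega) (by omega), v_F hr hro har hae (by omega) (by omega)]
    omega

theorem stmt_11 (a r : ℕ) (hr : 3 ≤ r) (hrodd : Odd r) (ha : r + 1 ≤ a)
    (haeven : Even a) (G : ℕ → ℕ) (hG : IsGrundy {1, a, 2 * a + r} G) :
    (∀ n, G (n + (3 * a + r)) = G n) ∧
    (∀ n < 3 * a + r,
      (n < a → G n = n % 2) ∧
      (n = a → G n = 2) ∧
      (a + 1 ≤ n → n ≤ 2 * a → G n = (n - a - 1) % 2) ∧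
      (n = 2 * a + 1 → G n = 2) ∧
      (2 * a + 2 ≤ n → n ≤ 3 * a + 1 → G n = (n - 2 * a - 2) % 2) ∧
      (3 * a + 2 ≤ n → n ≤ 3 * a + r - 2 → G n = 2 + (n - 3 * a - 2) % 2) ∧
      (n = 3 * a + r - 1 → G n = 2)) ∧
    (∀ c, 1 ≤ c →
      ((∀ n, G (n + c) ≠ G n) ↔
        ∃ s m : ℕ, c = s + m * (3 * a + r) ∧
          (s = 1 ∨ s = a ∨ s = a + 2 ∨ s = 2 * a + r - 2 ∨ s = 2 * a + r ∨
            s = 3 * a + r - 1))) := by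
  have hro : r % 2 = 1 := Nat.odd_iff.mp hrodd
  have hae : a % 2 = 0 := Nat.even_iff.mp haeven
  have hge := grundy_eq a r hr hro ha hae G hG
  refine ⟨?_, ?_, ?_⟩
  · intro n; rw [hge, hge, g_period]
  · intro n hn
    have h0 : gf a r n = valf a r n := g_eq_val a r hn
    refine ⟨?_, ?_, ?_, ?_, ?_, ?_, ?_⟩
    · intro h; rw [hge, h0, v_I1 hr hro ha hae h]
    · intro h; subst h; rw [hge, h0, v_a hr hro ha hae]
    · intro h1 h2; rw [hge, h0, v_D hr hro ha hae h1 h2]; omega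
    · intro h; subst h; rw [hge, h0, v_E hr hro ha hae]
    · intro h1 h2; rw [hge, h0, v_F hr hro ha hae h1 h2]; omega
    · intro h1 h2; rw [hge, h0, v_G hr hro ha hae h1 h2]; omega
    · intro h; subst h; rw [hge, h0, v_H hr hro ha hae]
  · intro c hc
    constructor
    · intro hsafe
      refine ⟨c % (3*a+r), c / (3*a+r), (Nat.mod_add_div' c (3*a+r)).symm, ?_⟩
      by_contra hnot
      push_neg at hnot
      obtain ⟨h1', h2', h3', h4', h5', h6'⟩ := hnot
      obtain ⟨n, hcol⟩ := collision a r hr hro ha hae (c % (3*a+r))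
        (Nat.mod_lt _ (by omega)) h1' h2' h3' h4' h5' h6'
      apply hsafe n
      rw [hge, hge]
      have : n + c = (n + c % (3*a+r)) + (c/(3*a+r))*(3*a+r) := by
        have := Nat.mod_add_div' c (3*a+r); omega
      rw [this, g_period_mul]
      exact hcol
    · rintro ⟨s, m, rfl, hs⟩
      intro n
      rw [hge, hge, show n + (s + m*(3*a+r)) = (n + s) + m*(3*a+r) by ring, g_period_mul]
      rcases hs with h | h | h | h | h | h
      · rw [h]; exact safe1 a r hr hro ha hae n
      · rw [h]; exact safe_a a r hr hro ha hae n
      · rw [h]; exact safe_a2 a r hr hro ha hae n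
      · rw [h, show 2*a+r-2 = 3*a+r - (a+2) by omega]
        exact safe_compl a r (a+2) (by omega) (safe_a2 a r hr hro ha hae) n
      · rw [h, show 2*a+r = 3*a+r - a by omega]
        exact safe_compl a r a (by omega) (safe_a a r hr hro ha hae) n
      · rw [h]; exact safe_compl a r 1 (by omega) (safe1 a r hr hro ha hae) n
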